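/- Let E be a finite-dimensional real inner product space and (X, 𝒜, μ) a measure space, and let c₀, C₀ > 0. For each k ∈ ℕ let A_k : X → (continuous linear endomorphisms of E) and A : X → (continuous linear endomorphisms of E) be strongly measurable, and assume that for μ-a.e. x ∈ X: A_k(x) and A(x) are self-adjoint, ⟨A_k(x)v, v⟩ ≥ c₀‖v‖² and ‖A_k(x)v‖ ≤ C₀‖v‖ for all v ∈ E (and likewise for A(x)), and A_k(x) → A(x) as k → ∞. Let f_k, f ∈ L²(μ; E) with sup_k ‖f_k‖_{L²(μ;E)} < ∞, and suppose f_k converges to f weakly in L²(μ;E) in the sense that ∫_X ⟨f_k, g⟩ dμ → ∫_X ⟨f, g⟩ dμ for every g ∈ L²(μ;E). Then ∫_X ⟨A f, f⟩ dμ ≤ liminf_{k→∞} ∫_X ⟨A_k f_k, f_k⟩ dμ. -/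

import Mathlib

/-!
Since `A_k(x)` is positive, `⟪A_k (f_k - f), f_k - f⟫ ≥ 0`, i.e. pointwise
`⟪A_k f_k, f_k⟫ ≥ 2 ⟪f_k, A_k f⟫ - ⟪f, A_k f⟫`, whose right-hand side is linear in `f_k`.
By dominated convergence `A_k f → A f` strongly in `L²`, and pairing a strongly convergent
sequence with a bounded weakly convergent one passes to the limit; so the integral of the
right-hand side tends to `∫ ⟪f, A f⟫`, which is therefore at most the `liminf`.
-/

open MeasureTheory Filter Topology
open scoped RealInnerProductSpace ENNReal

theorem ContinuousLinearMap.IsPositive.two_mul_inner_sub_inner_le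
    {E : Type*} [NormedAddCommGroup E] [InnerProductSpace ℝ E]
    {T : E →L[ℝ] E} (hT : T.IsPositive) (u w : E) :
    2 * ⟪w, T u⟫ - ⟪u, T u⟫ ≤ ⟪T w, w⟫ := by
  have h := hT.inner_nonneg_left (w - u)
  rw [map_sub, inner_sub_left, inner_sub_right, inner_sub_right] at h
  have hsymm : ⟪T u, w⟫ = ⟪u, T w⟫ := hT.isSymmetric u w
  linarith [real_inner_comm w (T u), real_inner_comm u (T u),
    real_inner_comm u (T w)]

section ClmApply

variable {𝕜 : Type*} [NontriviallyNormedField 𝕜] {E F : Type*} [NormedAddCommGroup E]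
  [NormedSpace 𝕜 E] [NormedAddCommGroup F] [NormedSpace 𝕜 F]
  {X : Type*} [MeasurableSpace X] {μ : Measure X} {B : X → E →L[𝕜] F} {u : X → E}

theorem MeasureTheory.AEStronglyMeasurable.clm_apply (hB : AEStronglyMeasurable B μ)
    (hu : AEStronglyMeasurable u μ) : AEStronglyMeasurable (fun x => B x (u x)) μ :=
  (isBoundedBilinearMap_apply (𝕜 := 𝕜)).continuous.comp_aestronglyMeasurable (hB.prodMk hu)

theorem MeasureTheory.MemLp.clm_apply {p : ℝ≥0∞} {C : ℝ} (hu : MemLp u p μ)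
    (hB : AEStronglyMeasurable B μ) (hC : ∀ᵐ x ∂μ, ∀ v, ‖B x v‖ ≤ C * ‖v‖) :
    MemLp (fun x => B x (u x)) p μ :=
  hu.of_le_mul (hB.clm_apply hu.1) (hC.mono fun x hx => hx (u x))

end ClmApply

section L2

variable {E : Type*} [NormedAddCommGroup E] [InnerProductSpace ℝ E]
  {X : Type*} [MeasurableSpace X] {μ : Measure X}

theorem MeasureTheory.MemLp.integrable_inner {u v : X → E} (hu : MemLp u 2 μ)
    (hv : MemLp v 2 μ) : Integrable (fun x => ⟪u x, v x⟫) μ :=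
  (L2.integrable_inner (𝕜 := ℝ) (hu.toLp u) (hv.toLp v)).congr <| by
    filter_upwards [hu.coeFn_toLp, hv.coeFn_toLp] with x hux hvx
    rw [hux, hvx]

theorem abs_integral_inner_le_eLpNorm_mul {u v : X → E} (hu : MemLp u 2 μ) (hv : MemLp v 2 μ) :
    |∫ x, ⟪u x, v x⟫ ∂μ| ≤ (eLpNorm u 2 μ).toReal * (eLpNorm v 2 μ).toReal := by
  have h := abs_real_inner_le_norm (hu.toLp u) (hv.toLp v)
  rw [L2.inner_def, Lp.norm_toLp, Lp.norm_toLp] at h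
  refine (le_of_eq (congrArg _ (integral_congr_ae ?_))).trans h
  filter_upwards [hu.coeFn_toLp, hv.coeFn_toLp] with x hux hvx
  rw [hux, hvx]

theorem tendsto_integral_inner_of_tendsto_eLpNorm_sub {h g : ℕ → X → E} {g₀ : X → E}
    {M : ℝ≥0∞} {ℓ : ℝ} (hh : ∀ k, MemLp (h k) 2 μ) (hM : M ≠ ∞)
    (hhM : ∀ k, eLpNorm (h k) 2 μ ≤ M) (hg : ∀ k, MemLp (g k) 2 μ) (hg₀ : MemLp g₀ 2 μ)
    (hstrong : Tendsto (fun k => eLpNorm (g k - g₀) 2 μ) atTop (𝓝 0))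
    (hweak : Tendsto (fun k => ∫ x, ⟪h k x, g₀ x⟫ ∂μ) atTop (𝓝 ℓ)) :
    Tendsto (fun k => ∫ x, ⟪h k x, g k x⟫ ∂μ) atTop (𝓝 ℓ) := by
  have hsplit : ∀ k, ∫ x, ⟪h k x, g k x⟫ ∂μ =
      ∫ x, ⟪h k x, (g k - g₀) x⟫ ∂μ + ∫ x, ⟪h k x, g₀ x⟫ ∂μ := fun k => by
    rw [← integral_add ((hh k).integrable_inner ((hg k).sub hg₀)) ((hh k).integrable_inner hg₀)]
    simp [← inner_add_right]
  have hsmall : Tendsto (fun k => ∫ x, ⟪h k x, (g k - g₀) x⟫ ∂μ) atTop (𝓝 0) := by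
    refine squeeze_zero_norm (fun k => ?_) (by
      simpa using (ENNReal.tendsto_toReal ENNReal.zero_ne_top |>.comp hstrong).const_mul M.toReal)
    exact (abs_integral_inner_le_eLpNorm_mul (hh k) ((hg k).sub hg₀)).trans <|
      mul_le_mul_of_nonneg_right (ENNReal.toReal_mono hM (hhM k)) ENNReal.toReal_nonneg
  simpa [hsplit] using hsmall.add hweak

end L2

section Dominated

variable {X : Type*} [MeasurableSpace X] {μ : Measure X}

theorem MeasureTheory.MemLp.eLpNorm_two_eq_ofReal_sqrt_integral {F : Type*}
    [NormedAddCommGroup F] {d : X → F} (hd : MemLp d 2 μ) :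
    eLpNorm d 2 μ = ENNReal.ofReal (√(∫ x, ‖d x‖ ^ 2 ∂μ)) := by
  rw [hd.eLpNorm_eq_integral_rpow_norm two_ne_zero ENNReal.ofNat_ne_top, Real.sqrt_eq_rpow]
  simp

theorem tendsto_eLpNorm_two_sub_of_dominated {F : Type*} [NormedAddCommGroup F]
    {g : ℕ → X → F} {g₀ : X → F} {G : X → ℝ}
    (hg : ∀ k, AEStronglyMeasurable (g k) μ) (hG : MemLp G 2 μ)
    (hbound : ∀ k, ∀ᵐ x ∂μ, ‖g k x‖ ≤ G x)
    (hlim : ∀ᵐ x ∂μ, Tendsto (fun k => g k x) atTop (𝓝 (g₀ x))) :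
    Tendsto (fun k => eLpNorm (g k - g₀) 2 μ) atTop (𝓝 0) := by
  have hg₀ : AEStronglyMeasurable g₀ μ := aestronglyMeasurable_of_tendsto_ae atTop hg hlim
  have hbound₀ : ∀ᵐ x ∂μ, ‖g₀ x‖ ≤ G x := by
    filter_upwards [ae_all_iff.2 hbound, hlim] with x hx hxlim
    exact le_of_tendsto' hxlim.norm hx
  have hdom : ∀ k, ∀ᵐ x ∂μ, ‖‖g k x - g₀ x‖ ^ 2‖ ≤ (2 * G x) ^ 2 := fun k => by
    filter_upwards [hbound k, hbound₀] with x hk h₀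
    rw [norm_pow, norm_norm]
    exact pow_le_pow_left₀ (norm_nonneg _) ((norm_sub_le _ _).trans (by linarith)) 2
  have hint : Integrable (fun x => (2 * G x) ^ 2) μ := (hG.const_mul 2).integrable_sq
  have hmeas : ∀ k, AEStronglyMeasurable (fun x => ‖g k x - g₀ x‖ ^ 2) μ := fun k =>
    ((hg k).sub hg₀).norm.pow 2
  have hsq : Tendsto (fun k => ∫ x, ‖g k x - g₀ x‖ ^ 2 ∂μ) atTop (𝓝 0) := by
    refine integral_zero X ℝ ▸ tendsto_integral_of_dominated_convergence _ hmeas hint hdom ?_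
    filter_upwards [hlim] with x hx
    simpa using (hx.sub_const (g₀ x)).norm.pow 2
  have hmem : ∀ k, MemLp (g k - g₀) 2 μ := fun k =>
    (memLp_two_iff_integrable_sq_norm ((hg k).sub hg₀)).2 (hint.mono' (hmeas k) (hdom k))
  have := ENNReal.tendsto_ofReal (Real.continuous_sqrt.tendsto 0 |>.comp hsq)
  rw [Real.sqrt_zero, ENNReal.ofReal_zero] at this
  exact this.congr fun k => ((hmem k).eLpNorm_two_eq_ofReal_sqrt_integral).symm

end Dominated

section Quadratic

variable {E : Type*} [NormedAddCommGroup E] [InnerProductSpace ℝ E]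
  {X : Type*} [MeasurableSpace X] {μ : Measure X} {T : X → E →L[ℝ] E}

theorem integral_inner_clm_apply_self_le {u : X → E} {C : ℝ} {M : ℝ≥0∞}
    (hT : AEStronglyMeasurable T μ) (hC : ∀ᵐ x ∂μ, ∀ v, ‖T x v‖ ≤ C * ‖v‖) (hu : MemLp u 2 μ)
    (hM : M ≠ ∞) (huM : eLpNorm u 2 μ ≤ M) :
    ∫ x, ⟪T x (u x), u x⟫ ∂μ ≤ (ENNReal.ofReal C * M).toReal * M.toReal := by
  have hTu : eLpNorm (fun x => T x (u x)) 2 μ ≤ ENNReal.ofReal C * M :=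
    (eLpNorm_le_mul_eLpNorm_of_ae_le_mul (hC.mono fun x hx => hx (u x)) 2).trans
      (mul_le_mul_right huM _)
  refine (le_abs_self _).trans <|
    (abs_integral_inner_le_eLpNorm_mul (hu.clm_apply hT hC) hu).trans ?_
  exact mul_le_mul (ENNReal.toReal_mono (ENNReal.mul_ne_top ENNReal.ofReal_ne_top hM) hTu)
    (ENNReal.toReal_mono hM huM) ENNReal.toReal_nonneg ENNReal.toReal_nonneg

theorem two_mul_integral_inner_sub_le_integral_inner_self {u w : X → E}
    (hT : ∀ᵐ x ∂μ, (T x).IsPositive) (hu : MemLp u 2 μ) (hw : MemLp w 2 μ)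
    (hTu : MemLp (fun x => T x (u x)) 2 μ) (hTw : MemLp (fun x => T x (w x)) 2 μ) :
    2 * ∫ x, ⟪w x, T x (u x)⟫ ∂μ - ∫ x, ⟪u x, T x (u x)⟫ ∂μ ≤ ∫ x, ⟪T x (w x), w x⟫ ∂μ := by
  rw [← integral_const_mul, ← integral_sub ((hw.integrable_inner hTu).const_mul 2)
    (hu.integrable_inner hTu)]
  refine integral_mono_ae (((hw.integrable_inner hTu).const_mul 2).sub
    (hu.integrable_inner hTu)) (hTw.integrable_inner hw) ?_
  filter_upwards [hT] with x hx
  exact hx.two_mul_inner_sub_inner_le (u x) (w x)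

end Quadratic

theorem dissipation_weak_lower_semicontinuity_general
    {E : Type*} [NormedAddCommGroup E] [InnerProductSpace ℝ E]
    {X : Type*} [MeasurableSpace X] (μ : Measure X)
    (c₀ C₀ : ℝ) (hc₀ : 0 < c₀)
    (A : ℕ → X → E →L[ℝ] E) (Alim : X → E →L[ℝ] E)
    (hAmeas : ∀ k, StronglyMeasurable (A k)) (hAlimmeas : StronglyMeasurable Alim)
    (hae : ∀ᵐ x ∂μ,
      (∀ k, (∀ v w : E, ⟪A k x v, w⟫ = ⟪v, A k x w⟫) ∧
            (∀ v : E, c₀ * ‖v‖ ^ 2 ≤ ⟪A k x v, v⟫) ∧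
            (∀ v : E, ‖A k x v‖ ≤ C₀ * ‖v‖)) ∧
      ((∀ v w : E, ⟪Alim x v, w⟫ = ⟪v, Alim x w⟫) ∧
        (∀ v : E, c₀ * ‖v‖ ^ 2 ≤ ⟪Alim x v, v⟫) ∧
        (∀ v : E, ‖Alim x v‖ ≤ C₀ * ‖v‖)) ∧
      Tendsto (fun k => A k x) atTop (𝓝 (Alim x)))
    (f : ℕ → X → E) (flim : X → E)
    (hf : ∀ k, MemLp (f k) 2 μ) (hflim : MemLp flim 2 μ)
    (hbdd : ∃ M : ℝ≥0∞, M < ⊤ ∧ ∀ k, eLpNorm (f k) 2 μ ≤ M)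
    (hweak : ∀ g : X → E, MemLp g 2 μ →
      Tendsto (fun k => ∫ x, ⟪f k x, g x⟫ ∂μ) atTop (𝓝 (∫ x, ⟪flim x, g x⟫ ∂μ))) :
    ∫ x, ⟪Alim x (flim x), flim x⟫ ∂μ ≤
      Filter.liminf (fun k => ∫ x, ⟪A k x (f k x), f k x⟫ ∂μ) atTop := by
  obtain ⟨M, hM, hfM⟩ := hbdd
  have hbound : ∀ k, ∀ᵐ x ∂μ, ∀ v, ‖A k x v‖ ≤ C₀ * ‖v‖ := fun k =>
    hae.mono fun x hx => (hx.1 k).2.2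
  have hpos : ∀ k, ∀ᵐ x ∂μ, (A k x).IsPositive := fun k => hae.mono fun x hx =>
    (ContinuousLinearMap.isPositive_iff _).2 ⟨(hx.1 k).1,
      fun v => (mul_nonneg hc₀.le (sq_nonneg ‖v‖)).trans ((hx.1 k).2.1 v)⟩
  have hAf : ∀ k, MemLp (fun x => A k x (flim x)) 2 μ := fun k =>
    hflim.clm_apply (hAmeas k).aestronglyMeasurable (hbound k)
  have hAlimf : MemLp (fun x => Alim x (flim x)) 2 μ :=
    hflim.clm_apply hAlimmeas.aestronglyMeasurable (hae.mono fun x hx => hx.2.1.2.2)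
  have hstrong := tendsto_eLpNorm_two_sub_of_dominated (fun k => (hAf k).1)
    (hflim.norm.const_mul C₀) (fun k => (hbound k).mono fun x hx => hx (flim x))
    (hae.mono fun x hx =>
      ((ContinuousLinearMap.apply ℝ E (flim x)).continuous.tendsto _).comp hx.2.2)
  have ha := tendsto_integral_inner_of_tendsto_eLpNorm_sub hf hM.ne hfM hAf hAlimf hstrong
    (hweak _ hAlimf)
  have hb := tendsto_integral_inner_of_tendsto_eLpNorm_sub (fun _ => hflim) hflim.2.ne
    (fun _ => le_rfl) hAf hAlimf hstrong tendsto_const_nhds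
  have hconv := (ha.const_mul 2).sub hb
  rw [two_mul, add_sub_cancel_right] at hconv
  have htangent := fun k => two_mul_integral_inner_sub_le_integral_inner_self (hpos k) hflim
    (hf k) (hAf k) ((hf k).clm_apply (hAmeas k).aestronglyMeasurable (hbound k))
  have hbddAbove := fun k => integral_inner_clm_apply_self_le
    (hAmeas k).aestronglyMeasurable (hbound k) (hf k) hM.ne (hfM k)
  calc ∫ x, ⟪Alim x (flim x), flim x⟫ ∂μ
      = ∫ x, ⟪flim x, Alim x (flim x)⟫ ∂μ :=
        integral_congr_ae (ae_of_all _ fun x => real_inner_comm _ _)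
    _ = liminf _ atTop := hconv.liminf_eq.symm
    _ ≤ _ := liminf_le_liminf (Eventually.of_forall htangent) hconv.isBoundedUnder_ge
        (isCoboundedUnder_ge_of_le atTop hbddAbove)

/-- Weak lower semicontinuity of quadratic dissipation functionals with pointwise
convergent, uniformly elliptic, uniformly bounded, self-adjoint coefficients. -/
theorem dissipation_weak_lower_semicontinuity
    {E : Type*} [NormedAddCommGroup E] [InnerProductSpace ℝ E] [FiniteDimensional ℝ E]
    {X : Type*} [MeasurableSpace X] (μ : Measure X)
    (c₀ C₀ : ℝ) (hc₀ : 0 < c₀) (hC₀ : 0 < C₀)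
    (A : ℕ → X → E →L[ℝ] E) (Alim : X → E →L[ℝ] E)
    (hAmeas : ∀ k, StronglyMeasurable (A k)) (hAlimmeas : StronglyMeasurable Alim)
    (hae : ∀ᵐ x ∂μ,
      (∀ k, (∀ v w : E, ⟪A k x v, w⟫ = ⟪v, A k x w⟫) ∧
            (∀ v : E, c₀ * ‖v‖ ^ 2 ≤ ⟪A k x v, v⟫) ∧
            (∀ v : E, ‖A k x v‖ ≤ C₀ * ‖v‖)) ∧
      ((∀ v w : E, ⟪Alim x v, w⟫ = ⟪v, Alim x w⟫) ∧
        (∀ v : E, c₀ * ‖v‖ ^ 2 ≤ ⟪Alim x v, v⟫) ∧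
        (∀ v : E, ‖Alim x v‖ ≤ C₀ * ‖v‖)) ∧
      Tendsto (fun k => A k x) atTop (𝓝 (Alim x)))
    (f : ℕ → X → E) (flim : X → E)
    (hf : ∀ k, MemLp (f k) 2 μ) (hflim : MemLp flim 2 μ)
    (hbdd : ∃ M : ℝ≥0∞, M < ⊤ ∧ ∀ k, eLpNorm (f k) 2 μ ≤ M)
    (hweak : ∀ g : X → E, MemLp g 2 μ →
      Tendsto (fun k => ∫ x, ⟪f k x, g x⟫ ∂μ) atTop (𝓝 (∫ x, ⟪flim x, g x⟫ ∂μ))) :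
    ∫ x, ⟪Alim x (flim x), flim x⟫ ∂μ ≤
      Filter.liminf (fun k => ∫ x, ⟪A k x (f k x), f k x⟫ ∂μ) atTop :=
  dissipation_weak_lower_semicontinuity_general μ c₀ C₀ hc₀ A Alim hAmeas hAlimmeas hae f flim hf
    hflim hbdd hweak
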